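/- arXiv:1304.0616 — 4 statements merged into one kernel-verified Lean document; each statement's English description precedes it below -/
import Mathlib

section
/- For 0 < α < 1, L > 0, and a natural number n, the fixed-memory-length fractional derivative of the power function f(t) = t^n satisfies D^α_L(t^n) = Σ_{k=0}^{n} n!·L^(k-α)·(t-L)^(n-k) / ((n-k)!·Γ(k-α+1)). -/
/-!
Write `a = t - L` and `G_α(n) = ∑_k n! L^(k-α) a^(n-k) / ((n-k)! Γ(k-α+1))` for the right-hand side.
Splitting off the `k = 0` term gives the recursion
`G_α(n+1) = a^(n+1) L^(-α) / Γ(1-α) + (n+1) G_(α-1)(n)`.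
Integration by parts shows that `∫_a^t (t-τ)^c τ^m dτ` satisfies the same recursion under
`c ↦ c + 1`, hence equals `Γ(c+1) G_(-(c+1))(m)`. For `f = t^n` we have `f'' = n(n-1) t^(n-2)`, so
with `c = 1 - α` the three terms of `D^α_L f` are the recursion for `G_α(n)` unfolded twice.
-/

open Real Finset

noncomputable def Dfml (α L : ℝ) (f : ℝ → ℝ) (t : ℝ) : ℝ :=
  f (t - L) * L ^ (-α) / Real.Gamma (1 - α)
  + deriv f (t - L) * L ^ (1 - α) / Real.Gamma (2 - α)
  + (1 / Real.Gamma (2 - α)) * ∫ τ in (t - L)..t, (t - τ) ^ (1 - α) * deriv (deriv f) τ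

open intervalIntegral

noncomputable def fmlPowSum (a L α : ℝ) (n : ℕ) : ℝ :=
  ∑ k ∈ range (n + 1),
    (n.factorial : ℝ) * L ^ ((k : ℝ) - α) * a ^ (n - k)
      / (((n - k).factorial : ℝ) * Gamma ((k : ℝ) - α + 1))

lemma fmlPowSum_zero (a L α : ℝ) : fmlPowSum a L α 0 = L ^ (-α) / Gamma (1 - α) := by
  simp [fmlPowSum, neg_add_eq_sub]

lemma fmlPowSum_succ (a L α : ℝ) (n : ℕ) :
    fmlPowSum a L α (n + 1)
      = a ^ (n + 1) * L ^ (-α) / Gamma (1 - α) + (n + 1) * fmlPowSum a L (α - 1) n := by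
  have hfac : ((n + 1).factorial : ℝ) ≠ 0 := by positivity
  rw [fmlPowSum, sum_range_succ', fmlPowSum, mul_sum, add_comm]
  congr 1
  · simp only [Nat.cast_zero, zero_sub, Nat.sub_zero, neg_add_eq_sub]
    field_simp
  · refine sum_congr rfl fun k _ => ?_
    rw [Nat.add_sub_add_right, Nat.factorial_succ]
    push_cast
    ring_nf

lemma fmlPowSum_eq_add_add (a L α : ℝ) (n : ℕ) :
    fmlPowSum a L α n
      = a ^ n * L ^ (-α) / Gamma (1 - α) + n * a ^ (n - 1) * L ^ (1 - α) / Gamma (2 - α)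
        + n * (n - 1 : ℕ) * fmlPowSum a L (α - 2) (n - 2) := by
  rcases n with _ | _ | n
  · simp [fmlPowSum_zero]
  · simp only [fmlPowSum_succ, fmlPowSum_zero]
    ring_nf
  · simp only [fmlPowSum_succ]
    push_cast
    ring_nf

lemma integral_sub_rpow_mul_pow_succ (t L c : ℝ) (hc : 0 ≤ c) (m : ℕ) :
    ∫ τ in (t - L)..t, (t - τ) ^ c * τ ^ (m + 1)
      = (L ^ (c + 1) * (t - L) ^ (m + 1)
          + (m + 1) * ∫ τ in (t - L)..t, (t - τ) ^ (c + 1) * τ ^ m) / (c + 1) := by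
  have hc1 : c + 1 ≠ 0 := by positivity
  have hv : ∀ x ∈ Set.uIcc (t - L) t,
      HasDerivAt (fun τ : ℝ => -(t - τ) ^ (c + 1) / (c + 1)) ((t - x) ^ c) x := by
    intro x _
    have h : HasDerivAt (fun τ : ℝ => -(t - τ) ^ (c + 1) / (c + 1))
        (-(-1 * (c + 1) * (t - x) ^ (c + 1 - 1)) / (c + 1)) x :=
      (((hasDerivAt_id' x).const_sub t).rpow_const (p := c + 1)
        (Or.inr (by linarith))).neg.div_const (c + 1)
    refine h.congr_deriv ?_
    rw [add_sub_cancel_right]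
    field_simp
  have hu : ∀ x ∈ Set.uIcc (t - L) t,
      HasDerivAt (fun τ : ℝ => τ ^ (m + 1)) (((m : ℝ) + 1) * x ^ m) x := by
    intro x _
    simpa using hasDerivAt_pow (m + 1) x
  have hparts := integral_mul_deriv_eq_deriv_mul hu hv
    ((continuous_const.mul (continuous_pow m)).intervalIntegrable _ _)
    (((continuous_rpow_const hc).comp (continuous_const.sub continuous_id)).intervalIntegrable _ _)
  simp only [mul_comm ((t - _) ^ c)]
  rw [hparts]
  have hint : ∫ x in (t - L)..t, ((m : ℝ) + 1) * x ^ m * (-(t - x) ^ (c + 1) / (c + 1))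
      = -((m + 1) / (c + 1)) * ∫ x in (t - L)..t, (t - x) ^ (c + 1) * x ^ m := by
    rw [← integral_const_mul]
    congr 1 with x
    ring
  rw [hint, sub_self, sub_sub_cancel, zero_rpow hc1]
  ring

lemma integral_sub_rpow_mul_pow (t L c : ℝ) (hc : 0 ≤ c) (m : ℕ) :
    ∫ τ in (t - L)..t, (t - τ) ^ c * τ ^ m
      = Gamma (c + 1) * fmlPowSum (t - L) L (-(c + 1)) m := by
  induction m generalizing c with
  | zero =>
    have hΓ := Gamma_add_one (show c + 1 ≠ 0 by positivity)
    simp only [pow_zero, mul_one, fmlPowSum_zero, neg_neg, sub_neg_eq_add, add_comm 1 (c + 1)]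
    rw [integral_comp_sub_left (fun x : ℝ => x ^ c) t, sub_self, sub_sub_cancel,
      integral_rpow (Or.inl (by linarith)), zero_rpow (by positivity), hΓ]
    have : Gamma (c + 1) ≠ 0 := (Gamma_pos_of_pos (by linarith)).ne'
    field_simp
    ring
  | succ m ih =>
    have hΓ := Gamma_add_one (show c + 1 ≠ 0 by positivity)
    rw [integral_sub_rpow_mul_pow_succ t L c hc, ih (c + 1) (by positivity), fmlPowSum_succ,
      show -(c + 1 + 1) = -(c + 1) - 1 by ring, neg_neg, show 1 - -(c + 1) = c + 1 + 1 by ring, hΓ]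
    field_simp

lemma deriv_deriv_pow {𝕜 : Type*} [NontriviallyNormedField 𝕜] (n : ℕ) :
    deriv (deriv fun s : 𝕜 => s ^ n) = fun s => (n : 𝕜) * ((n - 1 : ℕ) : 𝕜) * s ^ (n - 2) := by
  have h : deriv (fun s : 𝕜 => s ^ n) = fun s => (n : 𝕜) * s ^ (n - 1) :=
    funext fun _ => deriv_pow_field n
  rw [h, deriv_const_mul_field']
  funext s
  rw [deriv_pow_field, Nat.sub_sub, mul_assoc]

theorem stmt_3_general (α L : ℝ) (hα1 : α < 1) (n : ℕ) (t : ℝ) :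
    Dfml α L (fun s => s ^ n) t
    = ∑ k ∈ Finset.range (n + 1),
        (n.factorial : ℝ) * L ^ ((k : ℝ) - α) * (t - L) ^ (n - k)
          / (((n - k).factorial : ℝ) * Real.Gamma ((k : ℝ) - α + 1)) := by
  change _ = fmlPowSum (t - L) L α n
  have hΓ : Gamma (2 - α) ≠ 0 := (Gamma_pos_of_pos (by linarith)).ne'
  have hint : ∫ τ in (t - L)..t, (t - τ) ^ (1 - α) * deriv (deriv fun s => s ^ n) τ
      = n * (n - 1 : ℕ) * (Gamma (2 - α) * fmlPowSum (t - L) L (α - 2) (n - 2)) := by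
    simp only [deriv_deriv_pow, mul_left_comm ((t - _) ^ (1 - α)), integral_const_mul]
    rw [integral_sub_rpow_mul_pow t L (1 - α) (by linarith), show 1 - α + 1 = 2 - α by ring,
      show -(2 - α) = α - 2 by ring]
  rw [Dfml, hint, deriv_pow_field, fmlPowSum_eq_add_add _ _ α]
  field_simp

theorem stmt_3 (α L : ℝ) (hα0 : 0 < α) (hα1 : α < 1) (hL : 0 < L) (n : ℕ) (t : ℝ) :
    Dfml α L (fun s => s ^ n) t
    = ∑ k ∈ Finset.range (n + 1),
        (n.factorial : ℝ) * L ^ ((k : ℝ) - α) * (t - L) ^ (n - k)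
          / (((n - k).factorial : ℝ) * Real.Gamma ((k : ℝ) - α + 1)) :=
  stmt_3_general α L hα1 n t
end

section
/- For 0 < α < 1 and L > 0, the fixed-memory-length fractional derivative of the exponential function satisfies D^α_L(e^t) = (E_{1,1-α}(L) / (L^α · e^L)) · e^t, where E_{1,1-α} is the two-parameter Mittag-Leffler function. -/
open Real

noncomputable def mittagLeffler (a b z : ℝ) : ℝ := ∑' k : ℕ, z ^ k / Real.Gamma (a * k + b)

open Nat MeasureTheory in
lemma gamma_lb (α : ℝ) (hα1 : α < 1) (k : ℕ) :
    (k ! : ℝ) ≤ Real.Gamma ((k:ℝ) + 3 - α) := by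
  have h1 : Real.Gamma ((k:ℝ) + 2) = (k+1)! := by
    rw [show (k:ℝ) + 2 = ((k+1 : ℕ) : ℝ) + 1 by push_cast; ring]
    exact_mod_cast Real.Gamma_nat_eq_factorial (k+1)
  have h2 : Real.Gamma ((k:ℝ) + 2) ≤ Real.Gamma ((k:ℝ) + 3 - α) := by
    have hk : (0:ℝ) ≤ k := Nat.cast_nonneg k
    apply Real.Gamma_strictMonoOn_Ici.monotoneOn
    · simp only [Set.mem_Ici]; linarith
    · simp only [Set.mem_Ici]; linarith
    · linarith
  have h3 : (k ! : ℝ) ≤ (k+1)! := by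
    exact_mod_cast Nat.factorial_le (Nat.le_succ k)
  linarith

open Nat in
lemma summable_aux (α L : ℝ) (hα1 : α < 1) (hL : 0 < L) :
    Summable (fun k : ℕ => L ^ k / Real.Gamma ((k:ℝ) + 1 - α)) := by
  have key : Summable (fun k : ℕ => L ^ (k+2) / Real.Gamma (((k+2:ℕ):ℝ) + 1 - α)) := by
    apply Summable.of_nonneg_of_le (f := fun k => L ^ 2 * (L ^ k / k !))
    · intro k
      have hk : (0:ℝ) ≤ k := Nat.cast_nonneg k
      have := Real.Gamma_pos_of_pos (s := ((k+2:ℕ):ℝ) + 1 - α) (by push_cast; linarith)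
      positivity
    · intro k
      have hg := gamma_lb α hα1 k
      have hg0 : (0:ℝ) < k ! := by positivity
      have heq : ((k+2 : ℕ):ℝ) + 1 - α = (k:ℝ) + 3 - α := by push_cast; ring
      simp only [heq]
      calc L ^ (k+2) / Real.Gamma ((k:ℝ)+3-α) ≤ L ^ (k+2) / k ! :=
            div_le_div_of_nonneg_left (by positivity) hg0 hg
        _ = L ^ 2 * (L ^ k / k !) := by ring
    · exact (Real.summable_pow_div_factorial L).mul_left _
  exact (summable_nat_add_iff 2).mp key

open Nat in
lemma integral_beta (α L : ℝ) (hα1 : α < 1) (hL : 0 < L) (k : ℕ) :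
    ∫ s in (0:ℝ)..L, s ^ (1 - α) * (L - s) ^ k
      = Real.Gamma (2 - α) * k ! * L ^ ((k:ℝ) + 2 - α) / Real.Gamma ((k:ℝ) + 3 - α) := by
  have hk : (0:ℝ) ≤ k := Nat.cast_nonneg k
  set u : ℂ := ((2 - α : ℝ) : ℂ) with hu_def
  set v : ℂ := (k:ℂ) + 1 with hv_def
  have hu : 0 < u.re := by simp [hu_def]; linarith
  have hv : 0 < v.re := by simp [hv_def]; positivity
  have hbeta := Complex.betaIntegral_scaled u v hL
  have hΓ := Complex.Gamma_mul_Gamma_eq_betaIntegral hu hv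
  have huv : u + v = (((k:ℝ) + 3 - α : ℝ) : ℂ) := by rw [hu_def, hv_def]; push_cast; ring
  have hG3 : (0:ℝ) < Real.Gamma ((k:ℝ) + 3 - α) := Real.Gamma_pos_of_pos (by linarith)
  have hne : Complex.Gamma (u + v) ≠ 0 := by
    rw [huv, Complex.Gamma_ofReal]
    exact_mod_cast hG3.ne'
  have hβ : Complex.betaIntegral u v = Complex.Gamma u * Complex.Gamma v / Complex.Gamma (u + v) := by
    field_simp
    linear_combination -hΓ
  have hint : (∫ x in (0:ℝ)..L, ((x:ℂ)) ^ (u - 1) * ((L:ℂ) - x) ^ (v - 1))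
      = ((∫ s in (0:ℝ)..L, s ^ (1 - α) * (L - s) ^ k : ℝ) : ℂ) := by
    rw [← intervalIntegral.integral_ofReal]
    apply intervalIntegral.integral_congr
    intro x hx
    rw [Set.uIcc_of_le hL.le] at hx
    have h1 : ((x:ℂ)) ^ (u - 1) = ((x ^ (1-α) : ℝ) : ℂ) := by
      rw [show u - 1 = ((1 - α : ℝ):ℂ) by rw [hu_def]; push_cast; ring]
      rw [Complex.ofReal_cpow hx.1]
    have h2 : ((L:ℂ) - x) ^ (v - 1) = (((L - x) ^ k : ℝ) : ℂ) := by
      rw [show v - 1 = ((k:ℕ):ℂ) by rw [hv_def]; push_cast; ring]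
      rw [Complex.cpow_natCast]
      push_cast; ring
    simp only []
    rw [h1, h2]
    push_cast; ring
  have hLpow : (L:ℂ) ^ (u + v - 1) = ((L ^ ((k:ℝ) + 2 - α) : ℝ) : ℂ) := by
    rw [show u + v - 1 = (((k:ℝ) + 2 - α : ℝ) : ℂ) by rw [hu_def, hv_def]; push_cast; ring]
    rw [Complex.ofReal_cpow hL.le]
  have hGv : Complex.Gamma v = ((k ! : ℝ) : ℂ) := by
    rw [hv_def, show (k:ℂ) + 1 = ((k:ℕ):ℂ) + 1 by push_cast; ring, Complex.Gamma_nat_eq_factorial]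
    push_cast; ring
  have hGu : Complex.Gamma u = ((Real.Gamma (2-α) : ℝ) : ℂ) := by
    rw [hu_def, Complex.Gamma_ofReal]
  have final : ((∫ s in (0:ℝ)..L, s ^ (1 - α) * (L - s) ^ k : ℝ) : ℂ)
      = ((Real.Gamma (2 - α) * k ! * L ^ ((k:ℝ) + 2 - α) / Real.Gamma ((k:ℝ) + 3 - α) : ℝ) : ℂ) := by
    rw [← hint, hbeta, hβ, hLpow, hGv, hGu, huv, Complex.Gamma_ofReal]
    push_cast
    ring
  exact_mod_cast final

open Nat in
lemma summable_term (α L : ℝ) (hα1 : α < 1) (hL : 0 < L) :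
    Summable (fun k : ℕ => Real.Gamma (2-α) * L ^ ((k:ℝ)+2-α) / Real.Gamma ((k:ℝ)+3-α)) := by
  have h := ((summable_nat_add_iff 2).mpr (summable_aux α L hα1 hL)).mul_left
    (Real.Gamma (2-α) * L ^ (-α))
  apply h.congr
  intro k
  have h1 : L ^ ((k:ℝ)+2-α) = L ^ (k+2 : ℕ) * L ^ (-α) := by
    rw [← Real.rpow_natCast L (k+2), ← Real.rpow_add hL]
    push_cast; ring_nf
  have h2 : ((k+2:ℕ):ℝ) + 1 - α = (k:ℝ) + 3 - α := by push_cast; ring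
  simp only [h2]
  rw [h1]; ring

open Nat MeasureTheory in
lemma integral_exp_series (α L : ℝ) (hα0 : 0 < α) (hα1 : α < 1) (hL : 0 < L) :
    ∫ s in (0:ℝ)..L, s ^ (1 - α) * Real.exp (L - s)
      = ∑' k : ℕ, Real.Gamma (2-α) * L ^ ((k:ℝ)+2-α) / Real.Gamma ((k:ℝ)+3-α) := by
  set F : ℕ → ℝ → ℝ := fun k s => s ^ (1-α) * ((L - s) ^ k / k !) with hF
  have hrpow_cont : Continuous fun s : ℝ => s ^ (1-α) := by
    rw [continuous_iff_continuousAt]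
    intro x
    exact Real.continuousAt_rpow_const x _ (Or.inr (by linarith))
  have hFcont : ∀ k, Continuous (F k) := by
    intro k
    exact hrpow_cont.mul ((continuous_const.sub continuous_id).pow k |>.div_const _)
  have hFval : ∀ k, ∫ s in Set.Ioc (0:ℝ) L, F k s
      = Real.Gamma (2-α) * L ^ ((k:ℝ)+2-α) / Real.Gamma ((k:ℝ)+3-α) := by
    intro k
    have hk0 : (0:ℝ) < k ! := by positivity
    rw [← intervalIntegral.integral_of_le hL.le]
    have : ∀ s : ℝ, F k s = (k ! : ℝ)⁻¹ * (s ^ (1-α) * (L - s) ^ k) := by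
      intro s; rw [hF]; ring
    rw [intervalIntegral.integral_congr (fun s _ => this s),
      intervalIntegral.integral_const_mul, integral_beta α L hα1 hL k]
    have hkne : (k ! : ℝ) ≠ 0 := hk0.ne'
    rw [show ((k !:ℝ))⁻¹ * (Real.Gamma (2-α) * (k !:ℝ) * L ^ ((k:ℝ)+2-α) / Real.Gamma ((k:ℝ)+3-α))
        = ((k !:ℝ) * ((k !:ℝ))⁻¹) * (Real.Gamma (2-α) * L ^ ((k:ℝ)+2-α) / Real.Gamma ((k:ℝ)+3-α)) from by
          ring,
      mul_inv_cancel₀ hkne, one_mul]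
  have hFnonneg : ∀ k, ∀ s ∈ Set.Ioc (0:ℝ) L, 0 ≤ F k s := by
    intro k s hs
    have h1 : (0:ℝ) ≤ s ^ (1-α) := Real.rpow_nonneg hs.1.le _
    have h2 : (0:ℝ) ≤ L - s := by linarith [hs.2]
    positivity
  have hF_int : ∀ k, Integrable (F k) (volume.restrict (Set.Ioc 0 L)) := by
    intro k
    exact ((hFcont k).integrableOn_Ioc).integrable
  have hnorm : ∀ k, ∫ s in Set.Ioc (0:ℝ) L, ‖F k s‖
      = ∫ s in Set.Ioc (0:ℝ) L, F k s := by
    intro k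
    apply setIntegral_congr_fun measurableSet_Ioc
    intro s hs
    exact Real.norm_of_nonneg (hFnonneg k s hs)
  have hF_sum : Summable fun k => ∫ s in Set.Ioc (0:ℝ) L, ‖F k s‖ := by
    apply (summable_term α L hα1 hL).congr
    intro k
    rw [hnorm k, hFval k]
  have hswap := integral_tsum_of_summable_integral_norm hF_int hF_sum
  have hpt : ∀ s : ℝ, s ^ (1-α) * Real.exp (L - s) = ∑' k, F k s := by
    intro s
    have hexp : Real.exp (L - s) = ∑' k : ℕ, (L - s) ^ k / k ! := by
      rw [Real.exp_eq_exp_ℝ, NormedSpace.exp_eq_tsum_div]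
    rw [hexp, hF]
    exact (tsum_mul_left).symm
  calc ∫ s in (0:ℝ)..L, s ^ (1-α) * Real.exp (L - s)
      = ∫ s in Set.Ioc (0:ℝ) L, ∑' k, F k s := by
        rw [intervalIntegral.integral_of_le hL.le]
        exact setIntegral_congr_fun measurableSet_Ioc (fun s _ => hpt s)
    _ = ∑' k, ∫ s in Set.Ioc (0:ℝ) L, F k s := hswap.symm
    _ = ∑' k : ℕ, Real.Gamma (2-α) * L ^ ((k:ℝ)+2-α) / Real.Gamma ((k:ℝ)+3-α) :=
        tsum_congr hFval

theorem stmt_4 (α L : ℝ) (hα0 : 0 < α) (hα1 : α < 1) (hL : 0 < L) (t : ℝ) :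
    Dfml α L Real.exp t
    = (mittagLeffler 1 (1 - α) L / (L ^ α * Real.exp L)) * Real.exp t := by
  have hG1 : (0:ℝ) < Real.Gamma (1-α) := Real.Gamma_pos_of_pos (by linarith)
  have hG2 : (0:ℝ) < Real.Gamma (2-α) := Real.Gamma_pos_of_pos (by linarith)
  have hsum : Summable (fun k : ℕ => L ^ k / Real.Gamma ((k:ℝ) + 1 - α)) :=
    summable_aux α L hα1 hL
  -- split the Mittag-Leffler sum
  have hML : mittagLeffler 1 (1-α) L = 1/Real.Gamma (1-α) + L/Real.Gamma (2-α)
      + ∑' k : ℕ, L ^ (k+2) / Real.Gamma ((k:ℝ)+3-α) := by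
    have harg : ∀ k : ℕ, (1:ℝ) * k + (1-α) = (k:ℝ) + 1 - α := by intro k; ring
    have : mittagLeffler 1 (1-α) L = ∑' k : ℕ, L ^ k / Real.Gamma ((k:ℝ) + 1 - α) := by
      unfold mittagLeffler
      exact tsum_congr fun k => by rw [harg k]
    rw [this, Summable.tsum_eq_zero_add hsum, Summable.tsum_eq_zero_add ((summable_nat_add_iff 1).mpr hsum)]
    have e0 : L ^ (0:ℕ) / Real.Gamma (((0:ℕ):ℝ) + 1 - α) = 1 / Real.Gamma (1-α) := by norm_num
    have e1 : L ^ (0+1:ℕ) / Real.Gamma (((0+1:ℕ):ℝ) + 1 - α) = L / Real.Gamma (2-α) := by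
      norm_num [show ((1:ℕ):ℝ) + 1 - α = 2 - α from by push_cast; ring]
    have etail : (∑' n : ℕ, L ^ (n+1+1) / Real.Gamma (((n+1+1:ℕ):ℝ) + 1 - α))
        = ∑' k : ℕ, L ^ (k+2) / Real.Gamma ((k:ℝ)+3-α) := by
      apply tsum_congr; intro n
      have h3 : ((n+1+1:ℕ):ℝ) + 1 - α = (n:ℝ) + 3 - α := by push_cast; ring
      rw [h3]
    rw [e0, e1, etail]
    ring
  have hsub : (∫ τ in (t-L)..t, (t-τ)^(1-α) * Real.exp τ)
      = Real.exp (t-L) * ∫ s in (0:ℝ)..L, s^(1-α) * Real.exp (L-s) := by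
    have h1 : (∫ τ in (t-L)..t, (t-τ)^(1-α) * Real.exp τ)
        = ∫ τ in (t-L)..t, (fun s => s^(1-α) * Real.exp (t-s)) (t - τ) := by
      apply intervalIntegral.integral_congr
      intro τ _
      simp only []
      rw [show t - (t - τ) = τ by ring]
    rw [h1, intervalIntegral.integral_comp_sub_left (fun s => s^(1-α) * Real.exp (t-s)) t]
    rw [show t - t = (0:ℝ) by ring, show t - (t-L) = L by ring]
    rw [← intervalIntegral.integral_const_mul]
    apply intervalIntegral.integral_congr
    intro s _
    simp only []
    rw [show t - s = (t-L) + (L-s) by ring, Real.exp_add]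
    ring
  have hser := integral_exp_series α L hα0 hα1 hL
  have hS : (∑' k : ℕ, Real.Gamma (2-α) * L ^ ((k:ℝ)+2-α) / Real.Gamma ((k:ℝ)+3-α))
      = Real.Gamma (2-α) * L ^ (-α) * ∑' k : ℕ, L ^ (k+2) / Real.Gamma ((k:ℝ)+3-α) := by
    rw [← tsum_mul_left]
    apply tsum_congr
    intro k
    have h1 : L ^ ((k:ℝ)+2-α) = L ^ (k+2 : ℕ) * L ^ (-α) := by
      rw [← Real.rpow_natCast L (k+2), ← Real.rpow_add hL]
      push_cast; ring_nf
    rw [h1]; ring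
  unfold Dfml
  rw [Real.deriv_exp, Real.deriv_exp, hsub, hser, hS, hML]
  rw [Real.exp_sub]
  have hLα : (0:ℝ) < L ^ α := Real.rpow_pos_of_pos hL α
  have hLnegα : L ^ (-α) = (L ^ α)⁻¹ := by rw [Real.rpow_neg hL.le]
  have hL1α : L ^ (1-α) = L * (L ^ α)⁻¹ := by
    rw [show (1:ℝ) - α = 1 + (-α) by ring, Real.rpow_add hL, Real.rpow_one,
      Real.rpow_neg hL.le]
  rw [hLnegα, hL1α]
  have hexpL : Real.exp L ≠ 0 := (Real.exp_pos L).ne'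
  field_simp
end

section
/- For 0 < α < 1 and L > 0, the fixed-memory-length fractional derivative of sin satisfies D^α_L(sin)(t) = a·sin(t-L) + b·cos(t-L), where a = L^(-α)·E_{2,1-α}(-L²) and b = L^(1-α)·E_{2,2-α}(-L²). In particular, D^α_L(sin) is periodic with period 2π. -/
open Real

/-!
Since `sin'' = -sin`, the memory integral is `-∫₀ᴸ s^(1-α) sin(t - s) ds`, and writing
`sin(t - s) = sin(t - L) cos(L - s) + cos(t - L) sin(L - s)` leaves the two integrals
`∫₀ᴸ s^(x-1) cos(L - s) ds` and `∫₀ᴸ s^(x-1) sin(L - s) ds` with `x = 2 - α`. Integrating the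
Taylor series of `cos` and `sin` term by term against the Beta integral
`∫₀ᴸ s^(x-1) (L - s)^n ds = Γ(x) n! L^(x+n) / Γ(x+n+1)` turns them into series that are, up to
the factor `L^(b-1)`, the tails `k ≥ 1` of `E_{2,b}(-L²)` for `b = 1 - α` and `b = 2 - α`.
Periodicity is then immediate.
-/

open MeasureTheory Nat

theorem integral_rpow_mul_sub_pow {L x : ℝ} (hL : 0 < L) (hx : 0 < x) (n : ℕ) :
    ∫ s in 0..L, s ^ (x - 1) * (L - s) ^ n = Gamma x * n ! / Gamma (x + n + 1) * L ^ (x + n) := by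
  have hbeta := Complex.betaIntegral_scaled x (n + 1) hL
  rw [Complex.betaIntegral_eq_Gamma_mul_div _ _ (by simpa using hx)
    (by simp only [Complex.add_re, Complex.natCast_re, Complex.one_re]; positivity)] at hbeta
  have hreal : ∫ s in 0..L, (s : ℂ) ^ ((x : ℂ) - 1) * ((L : ℂ) - s) ^ ((n : ℂ) + 1 - 1)
      = ((∫ s in 0..L, s ^ (x - 1) * (L - s) ^ n : ℝ) : ℂ) := by
    rw [← intervalIntegral.integral_ofReal]
    refine intervalIntegral.integral_congr fun s hs => ?_
    rw [Set.uIcc_of_le hL.le] at hs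
    rw [add_sub_cancel_right, Complex.cpow_natCast, Complex.ofReal_mul,
      Complex.ofReal_cpow hs.1, Complex.ofReal_pow]
    push_cast; ring_nf
  have hG : Complex.Gamma ((n : ℂ) + 1) = ((n ! : ℝ) : ℂ) := by
    simpa using Complex.Gamma_nat_eq_factorial n
  have hexp : (x : ℂ) + (n + 1) - 1 = ((x + n : ℝ) : ℂ) := by push_cast; ring
  have hsum : (x : ℂ) + (n + 1) = ((x + n + 1 : ℝ) : ℂ) := by push_cast; ring
  rw [hreal, hG, hexp, hsum, ← Complex.ofReal_cpow hL.le, Complex.Gamma_ofReal,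
    Complex.Gamma_ofReal] at hbeta
  rw [mul_comm] at hbeta
  exact_mod_cast hbeta

theorem hasSum_integral_rpow_mul_comp_sub {L x : ℝ} (hL : 0 < L) (hx : 0 < x) {f : ℝ → ℝ}
    {c : ℕ → ℝ} {m : ℕ → ℕ} (hf : ∀ y ∈ Set.Icc 0 L, HasSum (fun n => c n * y ^ m n) (f y))
    (hc : Summable fun n => |c n| * L ^ m n) :
    HasSum (fun n => c n * ∫ s in 0..L, s ^ (x - 1) * (L - s) ^ m n)
      (∫ s in 0..L, s ^ (x - 1) * f (L - s)) := by
  have hIoc : Set.uIoc 0 L = Set.Ioc 0 L := Set.uIoc_of_le hL.le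
  simp_rw [← intervalIntegral.integral_const_mul, mul_left_comm (c _)]
  refine intervalIntegral.hasSum_integral_of_dominated_convergence
    (fun n s => s ^ (x - 1) * (|c n| * L ^ m n)) (fun n => ?_) (fun n => ?_) ?_ ?_ ?_
  · exact (by fun_prop : Measurable fun s : ℝ => s ^ (x - 1) * (c n * (L - s) ^ m n))
      |>.aestronglyMeasurable
  · refine ae_of_all _ fun s hs => ?_
    obtain ⟨hs0, hsL⟩ : s ∈ Set.Ioc 0 L := hIoc ▸ hs
    rw [norm_mul, norm_mul, Real.norm_of_nonneg (rpow_nonneg hs0.le _), norm_pow,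
      Real.norm_of_nonneg (sub_nonneg.2 hsL), Real.norm_eq_abs]
    have hsubL : L - s ≤ L := by linarith
    have hsub0 : 0 ≤ L - s := sub_nonneg.2 hsL
    gcongr
  · exact ae_of_all _ fun s _ => hc.mul_left _
  · simp_rw [tsum_mul_left]
    exact (intervalIntegral.intervalIntegrable_rpow' (by linarith)).mul_const _
  · refine ae_of_all _ fun s hs => ?_
    obtain ⟨hs0, hsL⟩ : s ∈ Set.Ioc 0 L := hIoc ▸ hs
    exact (hf (L - s) ⟨sub_nonneg.2 hsL, by linarith⟩).mul_left _

theorem rpow_mul_mittagLeffler_two_neg_sq {L b S : ℝ} (hL : 0 < L)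
    (h : HasSum (fun n : ℕ => (-1) ^ n * L ^ (b + 2 * n + 1) / Gamma (b + 2 * n + 2)) S) :
    L ^ (b - 1) * mittagLeffler 2 b (-L ^ 2) = L ^ (b - 1) / Gamma b - S := by
  have hterm (n : ℕ) : L ^ (b - 1) * ((-L ^ 2) ^ (n + 1) / Gamma (2 * (n + 1 : ℕ) + b))
      = -((-1) ^ n * L ^ (b + 2 * n + 1) / Gamma (b + 2 * n + 2)) := by
    have hpow : L ^ (b - 1) * L ^ (2 * n + 2) = L ^ (b + 2 * n + 1) := by
      rw [← rpow_natCast, ← rpow_add hL]; push_cast; ring_nf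
    rw [neg_pow, pow_succ, ← pow_mul, mul_add, mul_one, ← hpow]
    push_cast; ring_nf
  have hsum : HasSum (fun k : ℕ => L ^ (b - 1) * ((-L ^ 2) ^ k / Gamma (2 * k + b)))
      (L ^ (b - 1) / Gamma b - S) := by
    rw [← hasSum_nat_add_iff' 1]
    convert h.neg.congr_fun hterm using 1
    simp [div_eq_mul_inv]
  rw [mittagLeffler, ← tsum_mul_left, hsum.tsum_eq]

theorem hasSum_integral_rpow_mul_cos_sub {L x : ℝ} (hL : 0 < L) (hx : 0 < x) :
    HasSum (fun n : ℕ => (-1) ^ n * L ^ (x + 2 * n) / Gamma (x + 2 * n + 1))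
      ((∫ s in 0..L, s ^ (x - 1) * cos (L - s)) / Gamma x) := by
  have hc : Summable fun n : ℕ => |(-1) ^ n / ((2 * n)! : ℝ)| * L ^ (2 * n) :=
    (Real.hasSum_cosh L).summable.congr fun n => by simp [div_eq_inv_mul]
  refine ((hasSum_integral_rpow_mul_comp_sub hL hx
    (fun y _ => (Real.hasSum_cos y).congr_fun fun n => by ring) hc).div_const _).congr_fun
    fun n => ?_
  rw [integral_rpow_mul_sub_pow hL hx]
  have := (Gamma_pos_of_pos hx).ne'
  push_cast
  field_simp

theorem hasSum_integral_rpow_mul_sin_sub {L x : ℝ} (hL : 0 < L) (hx : 0 < x) :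
    HasSum (fun n : ℕ => (-1) ^ n * L ^ (x + 2 * n + 1) / Gamma (x + 2 * n + 2))
      ((∫ s in 0..L, s ^ (x - 1) * sin (L - s)) / Gamma x) := by
  have hc : Summable fun n : ℕ => |(-1) ^ n / ((2 * n + 1)! : ℝ)| * L ^ (2 * n + 1) :=
    (Real.hasSum_sinh L).summable.congr fun n => by simp [div_eq_inv_mul]
  refine ((hasSum_integral_rpow_mul_comp_sub hL hx
    (fun y _ => (Real.hasSum_sin y).congr_fun fun n => by ring) hc).div_const _).congr_fun
    fun n => ?_
  rw [integral_rpow_mul_sub_pow hL hx]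
  have := (Gamma_pos_of_pos hx).ne'
  push_cast
  field_simp
  ring_nf

theorem integral_sub_rpow_mul_sin {p : ℝ} (hp : -1 < p) (t L : ℝ) :
    ∫ τ in (t - L)..t, (t - τ) ^ p * sin τ
      = sin (t - L) * (∫ s in 0..L, s ^ p * cos (L - s))
        + cos (t - L) * ∫ s in 0..L, s ^ p * sin (L - s) := by
  have hint (f : ℝ → ℝ) (hf : Continuous f) :
      IntervalIntegrable (fun s => s ^ p * f s) volume 0 L :=
    (intervalIntegral.intervalIntegrable_rpow' hp).mul_continuousOn hf.continuousOn
  have hshift := intervalIntegral.integral_comp_sub_left (fun s => s ^ p * sin (t - s)) t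
    (a := t - L) (b := t)
  simp only [sub_sub_cancel, sub_self] at hshift
  rw [hshift, ← intervalIntegral.integral_const_mul, ← intervalIntegral.integral_const_mul,
    ← intervalIntegral.integral_add ((hint _ (by fun_prop)).const_mul _)
      ((hint _ (by fun_prop)).const_mul _)]
  refine intervalIntegral.integral_congr fun s _ => ?_
  rw [show t - s = (t - L) + (L - s) by ring, sin_add]
  ring

theorem Dfml_sin {α : ℝ} (hα : α < 2) (L t : ℝ) :
    Dfml α L sin t
      = sin (t - L) * (L ^ (-α) / Gamma (1 - α)
          - (∫ s in 0..L, s ^ (1 - α) * cos (L - s)) / Gamma (2 - α))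
        + cos (t - L) * (L ^ (1 - α) / Gamma (2 - α)
          - (∫ s in 0..L, s ^ (1 - α) * sin (L - s)) / Gamma (2 - α)) := by
  rw [Dfml, Real.deriv_sin, Real.deriv_cos']
  simp only [mul_neg, intervalIntegral.integral_neg]
  rw [integral_sub_rpow_mul_sin (by linarith)]
  ring

theorem stmt_5_general (α L : ℝ) (hα1 : α < 1) (hL : 0 < L) :
    (∀ t, Dfml α L Real.sin t
      = L ^ (-α) * mittagLeffler 2 (1 - α) (-L ^ 2) * Real.sin (t - L)
        + L ^ (1 - α) * mittagLeffler 2 (2 - α) (-L ^ 2) * Real.cos (t - L))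
    ∧ ∀ t, Dfml α L Real.sin (t + 2 * Real.pi) = Dfml α L Real.sin t := by
  have hx : 0 < 2 - α := by linarith
  have hcos : L ^ (-α) * mittagLeffler 2 (1 - α) (-L ^ 2)
      = L ^ (-α) / Gamma (1 - α) - (∫ s in 0..L, s ^ (1 - α) * cos (L - s)) / Gamma (2 - α) := by
    convert rpow_mul_mittagLeffler_two_neg_sq (b := 1 - α) hL
      ((hasSum_integral_rpow_mul_cos_sub hL hx).congr_fun fun n => by ring_nf)
      using 3 <;> ring_nf
  have hsin : L ^ (1 - α) * mittagLeffler 2 (2 - α) (-L ^ 2)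
      = L ^ (1 - α) / Gamma (2 - α) - (∫ s in 0..L, s ^ (1 - α) * sin (L - s)) / Gamma (2 - α) := by
    convert rpow_mul_mittagLeffler_two_neg_sq (b := 2 - α) hL
      (hasSum_integral_rpow_mul_sin_sub hL hx) using 3 <;> ring_nf
  have hformula (t : ℝ) : Dfml α L sin t
      = L ^ (-α) * mittagLeffler 2 (1 - α) (-L ^ 2) * sin (t - L)
        + L ^ (1 - α) * mittagLeffler 2 (2 - α) (-L ^ 2) * cos (t - L) := by
    rw [Dfml_sin (by linarith), ← hcos, ← hsin]
    ring
  refine ⟨hformula, fun t => ?_⟩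
  rw [hformula, hformula, show t + 2 * π - L = t - L + 2 * π by ring, sin_add_two_pi,
    cos_add_two_pi]

theorem stmt_5 (α L : ℝ) (hα0 : 0 < α) (hα1 : α < 1) (hL : 0 < L) :
    (∀ t, Dfml α L Real.sin t
      = L ^ (-α) * mittagLeffler 2 (1 - α) (-L ^ 2) * Real.sin (t - L)
        + L ^ (1 - α) * mittagLeffler 2 (2 - α) (-L ^ 2) * Real.cos (t - L))
    ∧ ∀ t, Dfml α L Real.sin (t + 2 * Real.pi) = Dfml α L Real.sin t :=
  stmt_5_general α L hα1 hL
end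

section
/- For a fixed natural number k and real α with α not a nonpositive integer shifted appropriately, lim_{n→∞} (-1)^(n-k) · ((α-k-1) choose (n-k)) · (n-k)^(α-k) = 1/Γ(k-α+1), where the generalized binomial coefficient is Γ(α-k)/( (n-k)!·Γ(α-k-(n-k)+1) ). -/
open Real Filter Finset

noncomputable def genBinom (β : ℝ) (n : ℕ) : ℝ :=
  (∏ j ∈ Finset.range n, (β - j)) / (n.factorial : ℝ)

theorem stmt_10 (k : ℕ) (α : ℝ) (hα : 0 < α) (hαn : ∀ n : ℕ, α ≠ n) :
    Filter.Tendsto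
      (fun n : ℕ => (-1 : ℝ) ^ n * genBinom (α - k - 1) n * (n : ℝ) ^ (α - k))
      Filter.atTop (nhds (1 / Real.Gamma ((k : ℝ) - α + 1))) := by
  set x : ℝ := (k : ℝ) - α + 1 with hxdef
  have hx : ∀ m : ℕ, x ≠ -m := by
    intro m h
    have : α = (k + 1 + m : ℕ) := by push_cast; linarith
    exact hαn _ this
  have hΓ : Real.Gamma x ≠ 0 := Real.Gamma_ne_zero hx
  have hmain : Tendsto (fun n : ℕ => (Real.GammaSeq x n)⁻¹ * ((n : ℝ) / ((n : ℝ) + x)))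
      atTop (nhds ((Real.Gamma x)⁻¹ * 1)) :=
    ((Real.GammaSeq_tendsto_Gamma x).inv₀ hΓ).mul (tendsto_natCast_div_add_atTop x)
  rw [one_div]
  refine (tendsto_congr' ?_).mp (by simpa using hmain)
  filter_upwards [eventually_ge_atTop 1] with n hn
  have hn0 : (0 : ℝ) < n := by exact_mod_cast hn
  have hxn : x + (n : ℝ) ≠ 0 := fun h => hx n (by linarith)
  have hfac : (n.factorial : ℝ) ≠ 0 := by exact_mod_cast n.factorial_ne_zero
  have hnx : (0 : ℝ) < (n : ℝ) ^ x := Real.rpow_pos_of_pos hn0 x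
  have hprod : ∏ j ∈ Finset.range n, (x + j)
      = (-1 : ℝ) ^ n * ∏ j ∈ Finset.range n, (α - k - 1 - j) := by
    calc ∏ j ∈ Finset.range n, (x + j)
        = ∏ j ∈ Finset.range n, ((-1) * (α - k - 1 - j)) :=
          Finset.prod_congr rfl fun j _ => by simp [hxdef]; ring
      _ = (-1 : ℝ) ^ n * ∏ j ∈ Finset.range n, (α - k - 1 - j) := by
          rw [Finset.prod_mul_distrib, Finset.prod_const, Finset.card_range]
  have hpow : (n : ℝ) ^ x * (n : ℝ) ^ (α - k) = (n : ℝ) := by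
    rw [← Real.rpow_add hn0, show x + (α - k) = 1 by ring, Real.rpow_one]
  have hGS : (Real.GammaSeq x n)⁻¹
      = ((∏ j ∈ Finset.range n, (x + j)) * (x + n)) / ((n : ℝ) ^ x * n.factorial) := by
    rw [Real.GammaSeq, inv_div, Finset.prod_range_succ]
  have hden : ((n : ℝ) ^ x * n.factorial) * ((n : ℝ) + x) ≠ 0 :=
    mul_ne_zero (mul_ne_zero hnx.ne' hfac) (by rw [add_comm]; exact hxn)
  rw [hGS, hprod, div_mul_div_comm, genBinom,
    show (-1 : ℝ) ^ n * ((∏ j ∈ Finset.range n, (α - k - 1 - j)) / n.factorial)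
        * (n : ℝ) ^ (α - k)
      = ((-1 : ℝ) ^ n * (∏ j ∈ Finset.range n, (α - k - 1 - j)) * (n : ℝ) ^ (α - k))
        / n.factorial from by ring,
    div_eq_div_iff hden hfac]
  linear_combination (-(-1 : ℝ) ^ n * (∏ j ∈ Finset.range n, (α - k - 1 - j))
    * (n.factorial : ℝ) * ((n : ℝ) + x)) * hpow
end
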